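/- Let G be a directed graph on n vertices in which every vertex has out-degree at least 1, with transition matrix P given by P_{ij} = A_{ij}/d_out(j) for adjacency matrix A. Let p_T ∈ (0,1), Q = (1−p_T)P + (p_T/n)·J with J the n×n all-ones matrix, let π be the PageRank vector (the probability vector with Qπ = π), and let u be the uniform distribution on [n]. Fix an integer t ≥ 0 and 1 ≤ k ≤ n. Then for every subset S ⊆ [n] with |S| = k that maximizes (Q^t u)(S) over all subsets of cardinality k, one has π(S) ≥ max_{T ⊆ [n], |T| = k} π(T) − √((1−p_T)^{t+1} / p_T). -/

import Mathlib

/-!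
On vectors of total mass zero the teleportation term of `Q` vanishes, so `Q ^ t` acts there as
`(1 - p_T) ^ t • P ^ t`, and the column-stochastic `P ^ t` does not increase the `ℓ¹` norm.
Stationarity gives `π ≥ p_T / n` pointwise, hence `‖u - π‖₁ ≤ 2 (1 - p_T)` and
`‖Q ^ t u - π‖₁ ≤ 2 (1 - p_T) ^ (t + 1)`. Since `S` maximizes the mass of `Q ^ t u`, the deficit
`π(T) - π(S)` is at most `‖Q ^ t u - π‖₁`, and `2a ≤ √(a / p_T)` for `0 ≤ a ≤ 1 - p_T`
because `4 p_T (1 - p_T) ≤ 1`.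
-/

open Matrix Finset

section ColStochastic

variable {ι : Type*} [Fintype ι] [DecidableEq ι]

lemma Matrix.sum_abs_mulVec_le_of_mem_colStochastic {P : Matrix ι ι ℝ}
    (hP : P ∈ colStochastic ℝ ι) (v : ι → ℝ) : ∑ i, |(P *ᵥ v) i| ≤ ∑ i, |v i| :=
  calc ∑ i, |(P *ᵥ v) i| ≤ ∑ i, ∑ j, P i j * |v j| := by
        refine sum_le_sum fun i _ => (abs_sum_le_sum_abs _ _).trans_eq ?_
        simp only [abs_mul, abs_of_nonneg (nonneg_of_mem_colStochastic hP)]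
    _ = ∑ i, |v i| := by
        rw [sum_comm]
        simp only [← sum_mul, sum_col_of_mem_colStochastic hP, one_mul]

lemma Matrix.of_div_colSum_mem_colStochastic {A : Matrix ι ι ℝ} (hA : ∀ i j, 0 ≤ A i j)
    (hdeg : ∀ j, 0 < ∑ i, A i j) : of (fun i j => A i j / ∑ i', A i' j) ∈ colStochastic ℝ ι :=
  mem_colStochastic_iff_sum.2
    ⟨fun i j => div_nonneg (hA i j) (hdeg j).le,
     fun j => by simp only [of_apply, ← sum_div, div_self (hdeg j).ne']⟩

end ColStochastic

lemma Matrix.pow_mulVec_eq_self {ι α : Type*} [Fintype ι] [DecidableEq ι] [Semiring α]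
    {M : Matrix ι ι α} {v : ι → α} (h : M *ᵥ v = v) (m : ℕ) : (M ^ m) *ᵥ v = v := by
  induction m with
  | zero => simp
  | succ m ih => rw [pow_succ, ← mulVec_mulVec, h, ih]

lemma Finset.sum_sub_sum_le_sum_abs_sub {ι : Type*} [Fintype ι] {x y : ι → ℝ} {S T : Finset ι}
    (hTS : ∑ i ∈ T, x i ≤ ∑ i ∈ S, x i) :
    ∑ i ∈ T, y i - ∑ i ∈ S, y i ≤ ∑ i, |x i - y i| := by
  have sum_le_sum_posPart : ∀ (s : Finset ι) (f : ι → ℝ), ∑ i ∈ s, f i ≤ ∑ i, (f i)⁺ :=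
    fun s f => (sum_le_sum fun i _ => le_posPart (f i)).trans
      (sum_le_sum_of_subset_of_nonneg (subset_univ s) fun i _ _ => posPart_nonneg (f i))
  have hT := sum_le_sum_posPart T (fun i => y i - x i)
  have hS := sum_le_sum_posPart S (fun i => x i - y i)
  have habs : ∑ i, |x i - y i| = ∑ i, (x i - y i)⁺ + ∑ i, (y i - x i)⁺ := by
    simp only [← sum_add_distrib, ← neg_sub (x _) (y _), posPart_neg, posPart_add_negPart]
  simp only [sum_sub_distrib] at hT hS
  linarith

lemma Finset.sum_abs_le_of_sum_eq_zero {ι : Type*} [Fintype ι] {v : ι → ℝ} {c : ℝ}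
    (hv : ∑ i, v i = 0) (hc : 0 ≤ c) (hvc : ∀ i, v i ≤ c) :
    ∑ i, |v i| ≤ 2 * Fintype.card ι * c := by
  have hpos : ∑ i, (v i)⁺ ≤ Fintype.card ι * c := by
    simpa using sum_le_card_nsmul univ (fun i => (v i)⁺) c fun i _ => max_le (hvc i) hc
  have hsplit : ∑ i, (v i)⁺ - ∑ i, (v i)⁻ = 0 := by
    rw [← sum_sub_distrib, ← hv]
    simp only [posPart_sub_negPart]
  calc ∑ i, |v i| = ∑ i, (v i)⁺ + ∑ i, (v i)⁻ := by
        simp only [← sum_add_distrib, posPart_add_negPart]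
    _ ≤ 2 * Fintype.card ι * c := by linarith

lemma two_mul_le_sqrt_div {a p : ℝ} (hp : 0 < p) (ha : 0 ≤ a) (hap : a ≤ 1 - p) :
    2 * a ≤ √(a / p) := by
  rw [Real.le_sqrt (by positivity) (by positivity), le_div_iff₀ hp]
  nlinarith [sq_nonneg (2 * p - 1), mul_le_mul_of_nonneg_left hap ha]

section GoogleMatrix

variable {ι : Type*} [Fintype ι]

noncomputable def googleMatrix (P : Matrix ι ι ℝ) (p : ℝ) : Matrix ι ι ℝ :=
  (1 - p) • P + (p / Fintype.card ι) • of fun _ _ => 1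

variable {P : Matrix ι ι ℝ} {p : ℝ}

lemma googleMatrix_mulVec_apply (v : ι → ℝ) (i : ι) :
    (googleMatrix P p *ᵥ v) i = (1 - p) * (P *ᵥ v) i + p / Fintype.card ι * ∑ j, v j := by
  rw [googleMatrix, add_mulVec, smul_mulVec, smul_mulVec]
  simp [mulVec, dotProduct]

lemma googleMatrix_mulVec_of_sum_eq_zero {v : ι → ℝ} (hv : ∑ i, v i = 0) :
    googleMatrix P p *ᵥ v = (1 - p) • P *ᵥ v := by
  ext i
  simp [googleMatrix_mulVec_apply, hv]

variable [DecidableEq ι]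

lemma googleMatrix_pow_mulVec_of_sum_eq_zero (hP : P ∈ colStochastic ℝ ι) (m : ℕ) :
    ∀ {v : ι → ℝ}, ∑ i, v i = 0 → googleMatrix P p ^ m *ᵥ v = (1 - p) ^ m • (P ^ m *ᵥ v) := by
  induction m with
  | zero => simp
  | succ m ih =>
    intro v hv
    rw [pow_succ, ← mulVec_mulVec, googleMatrix_mulVec_of_sum_eq_zero hv, mulVec_smul,
      ih ((sum_mulVec_of_mem_colStochastic hP).trans hv), smul_smul, mulVec_mulVec, ← pow_succ,
      ← pow_succ']

lemma sum_abs_googleMatrix_pow_mulVec_le (hP : P ∈ colStochastic ℝ ι) (hp : p ≤ 1) (m : ℕ)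
    {v : ι → ℝ} (hv : ∑ i, v i = 0) :
    ∑ i, |(googleMatrix P p ^ m *ᵥ v) i| ≤ (1 - p) ^ m * ∑ i, |v i| := by
  have h1p : 0 ≤ (1 - p) ^ m := pow_nonneg (sub_nonneg.2 hp) m
  simp only [googleMatrix_pow_mulVec_of_sum_eq_zero hP m hv, Pi.smul_apply, smul_eq_mul, abs_mul,
    abs_of_nonneg h1p, ← mul_sum]
  exact mul_le_mul_of_nonneg_left (sum_abs_mulVec_le_of_mem_colStochastic (pow_mem hP m) v) h1p

variable {π : ι → ℝ}

lemma div_card_le_of_googleMatrix_mulVec_eq_self (hP : P ∈ colStochastic ℝ ι) (hp : p ≤ 1)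
    (hπ0 : ∀ i, 0 ≤ π i) (hπ1 : ∑ i, π i = 1) (hfix : googleMatrix P p *ᵥ π = π) (i : ι) :
    p / Fintype.card ι ≤ π i := by
  have hi := congrFun hfix i
  rw [googleMatrix_mulVec_apply, hπ1, mul_one] at hi
  linarith [mul_nonneg (sub_nonneg.2 hp) (nonneg_mulVec_of_mem_colStochastic hP hπ0 i)]

lemma sum_abs_uniform_sub_le_of_googleMatrix_mulVec_eq_self [Nonempty ι]
    (hP : P ∈ colStochastic ℝ ι) (hp : p ≤ 1) (hπ0 : ∀ i, 0 ≤ π i) (hπ1 : ∑ i, π i = 1)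
    (hfix : googleMatrix P p *ᵥ π = π) :
    ∑ i, |1 / (Fintype.card ι : ℝ) - π i| ≤ 2 * (1 - p) := by
  calc ∑ i, |1 / (Fintype.card ι : ℝ) - π i|
      ≤ 2 * Fintype.card ι * ((1 - p) / Fintype.card ι) := by
        refine sum_abs_le_of_sum_eq_zero ?_ (div_nonneg (sub_nonneg.2 hp) (Nat.cast_nonneg _))
          fun i => ?_
        · simp [sum_sub_distrib, hπ1]
        · have := div_card_le_of_googleMatrix_mulVec_eq_self hP hp hπ0 hπ1 hfix i
          rw [sub_div]
          linarith
    _ = 2 * (1 - p) := by field_simp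

lemma sum_abs_googleMatrix_pow_mulVec_uniform_sub_le [Nonempty ι] (hP : P ∈ colStochastic ℝ ι)
    (hp : p ≤ 1) (hπ0 : ∀ i, 0 ≤ π i) (hπ1 : ∑ i, π i = 1) (hfix : googleMatrix P p *ᵥ π = π)
    (t : ℕ) :
    ∑ i, |(googleMatrix P p ^ t *ᵥ fun _ => 1 / (Fintype.card ι : ℝ)) i - π i|
      ≤ 2 * (1 - p) ^ (t + 1) := by
  set u : ι → ℝ := fun _ => 1 / (Fintype.card ι : ℝ)
  have hdiff : (googleMatrix P p ^ t *ᵥ u) - π = googleMatrix P p ^ t *ᵥ (u - π) := by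
    rw [mulVec_sub, pow_mulVec_eq_self hfix]
  have hzero : ∑ i, (u - π) i = 0 := by simp [u, sum_sub_distrib, hπ1]
  calc ∑ i, |(googleMatrix P p ^ t *ᵥ u) i - π i|
      = ∑ i, |(googleMatrix P p ^ t *ᵥ (u - π)) i| := by simp only [← hdiff, Pi.sub_apply]
    _ ≤ (1 - p) ^ t * ∑ i, |u i - π i| := sum_abs_googleMatrix_pow_mulVec_le hP hp t hzero
    _ ≤ (1 - p) ^ t * (2 * (1 - p)) :=
        mul_le_mul_of_nonneg_left
          (sum_abs_uniform_sub_le_of_googleMatrix_mulVec_eq_self hP hp hπ0 hπ1 hfix)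
          (pow_nonneg (sub_nonneg.2 hp) t)
    _ = 2 * (1 - p) ^ (t + 1) := by ring

end GoogleMatrix

theorem mixing_loss_captured_mass_general
    (n : ℕ) (hn : 0 < n) (A P : Matrix (Fin n) (Fin n) ℝ)
    (hA : ∀ i j, A i j = 0 ∨ A i j = 1)
    (hdeg : ∀ j, 1 ≤ ∑ i, A i j)
    (hP : ∀ i j, P i j = A i j / ∑ i', A i' j)
    (pT : ℝ) (hpT0 : 0 < pT) (hpT1 : pT < 1)
    (Q : Matrix (Fin n) (Fin n) ℝ)
    (hQ : Q = (1 - pT) • P + (pT / (n : ℝ)) • Matrix.of (fun _ _ => (1 : ℝ)))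
    (π : Fin n → ℝ) (hπ0 : ∀ i, 0 ≤ π i) (hπ1 : ∑ i, π i = 1)
    (hfix : Q.mulVec π = π)
    (u : Fin n → ℝ) (hu : ∀ i, u i = 1 / (n : ℝ))
    (t k : ℕ)
    (S : Finset (Fin n))
    (hSmax : ∀ T : Finset (Fin n), T.card = k →
      ∑ i ∈ T, ((Q ^ t).mulVec u) i ≤ ∑ i ∈ S, ((Q ^ t).mulVec u) i) :
    ∀ T : Finset (Fin n), T.card = k →
      ∑ i ∈ T, π i - Real.sqrt ((1 - pT) ^ (t + 1) / pT) ≤ ∑ i ∈ S, π i := by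
  intro T hT
  have hPs : P ∈ colStochastic ℝ (Fin n) := by
    rw [show P = of fun i j => A i j / ∑ i', A i' j from Matrix.ext hP]
    exact of_div_colSum_mem_colStochastic
      (fun i j => (hA i j).elim (·.ge) (fun h => h ▸ zero_le_one)) (fun j => by linarith [hdeg j])
  have : Nonempty (Fin n) := ⟨⟨0, hn⟩⟩
  have hcard : (Fintype.card (Fin n) : ℝ) = n := by simp
  rw [← hcard] at hQ hu
  obtain rfl : Q = googleMatrix P pT := hQ
  obtain rfl : u = fun _ => 1 / (Fintype.card (Fin n) : ℝ) := funext hu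
  have hdist := sum_abs_googleMatrix_pow_mulVec_uniform_sub_le hPs hpT1.le hπ0 hπ1 hfix t
  have hsqrt := two_mul_le_sqrt_div hpT0 (pow_nonneg (sub_nonneg.2 hpT1.le) (t + 1))
    (pow_le_of_le_one (sub_nonneg.2 hpT1.le) (by linarith) (Nat.succ_ne_zero t))
  linarith [sum_sub_sum_le_sum_abs_sub (y := π) (hSmax T hT)]

/-- With `P`, `Q`, `π`, `u` as in the PageRank setting (adjacency
matrix `A` with all out-degrees ≥ 1, `P i j = A i j / d_out(j)`, `p_T ∈ (0,1)`,
`Q = (1-p_T) P + (p_T/n) J`, `Q π = π`), fix `t ≥ 0` and `1 ≤ k ≤ n`. Every set `S` of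
cardinality `k` maximizing `(Q^t u)(S)` over sets of cardinality `k` satisfies
`π(S) ≥ max_{|T| = k} π(T) - √((1 - p_T)^{t+1} / p_T)`. -/
theorem mixing_loss_captured_mass
    (n : ℕ) (hn : 0 < n) (A P : Matrix (Fin n) (Fin n) ℝ)
    (hA : ∀ i j, A i j = 0 ∨ A i j = 1)
    (hdeg : ∀ j, 1 ≤ ∑ i, A i j)
    (hP : ∀ i j, P i j = A i j / ∑ i', A i' j)
    (pT : ℝ) (hpT0 : 0 < pT) (hpT1 : pT < 1)
    (Q : Matrix (Fin n) (Fin n) ℝ)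
    (hQ : Q = (1 - pT) • P + (pT / (n : ℝ)) • Matrix.of (fun _ _ => (1 : ℝ)))
    (π : Fin n → ℝ) (hπ0 : ∀ i, 0 ≤ π i) (hπ1 : ∑ i, π i = 1)
    (hfix : Q.mulVec π = π)
    (u : Fin n → ℝ) (hu : ∀ i, u i = 1 / (n : ℝ))
    (t k : ℕ) (hk1 : 1 ≤ k) (hkn : k ≤ n)
    (S : Finset (Fin n)) (hScard : S.card = k)
    (hSmax : ∀ T : Finset (Fin n), T.card = k →
      ∑ i ∈ T, ((Q ^ t).mulVec u) i ≤ ∑ i ∈ S, ((Q ^ t).mulVec u) i) :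
    ∀ T : Finset (Fin n), T.card = k →
      ∑ i ∈ T, π i - Real.sqrt ((1 - pT) ^ (t + 1) / pT) ≤ ∑ i ∈ S, π i :=
  mixing_loss_captured_mass_general n hn A P hA hdeg hP pT hpT0 hpT1 Q hQ π hπ0 hπ1 hfix u hu t k S
    hSmax
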